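/- Let U be a supertropical semiring with ghost ideal M and 𝔞 an ideal of U; write x ~ y for x ~E(𝔞) y. Then: (i) if e*a < e*x (in the ghost order) for every a ∈ 𝔞, then the E(𝔞)-class of x is {x}, i.e., x ~ y implies y = x; (ii) if e*x ≤ e*a for some a ∈ 𝔞, then x ~ 0. Consequently the equivalence classes of E(𝔞) are exactly the set sat(𝔞) (the class of 0) and the one-point sets {x} with x ∉ sat(𝔞). -/

import Mathlib

/-- The equivalence relation `E(𝔞)` associated to an ideal (as a set) of a
commutative semiring. -/
def STRel {R : Type*} [CommSemiring R] (I : Set R) (x y : R) : Prop :=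
  ∃ a ∈ I, ∃ b ∈ I, x + a = y + b

/-- An ideal of a commutative semiring, as a set. -/
def IsSemiringIdeal {R : Type*} [CommSemiring R] (I : Set R) : Prop :=
  (0 : R) ∈ I ∧ (∀ x ∈ I, ∀ y ∈ I, x + y ∈ I) ∧ (∀ r : R, ∀ x ∈ I, r * x ∈ I)

/-- The saturum of an ideal `𝔞`. -/
def STSat {R : Type*} [CommSemiring R] (I : Set R) : Set R :=
  {x : R | ∃ a ∈ I, x + a ∈ I}

/-! Write `e = 1 + 1`. The axioms say that `x + y` is whichever summand has the larger ghost
`e x`, `e y` in the (total) ghost order, and the ghost `e x` when the ghosts agree. If `e a < e x`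
for all `a ∈ 𝔞`, adding an element of `𝔞` never changes `x`, and comparing ghosts in
`x = x + a = y + b` shows `y + b = y`. If `e x ≤ e a` with `a ∈ 𝔞`, the ghost `e a ∈ 𝔞` absorbs
`x`, so `x + e a = 0 + e a`. By totality every `x` falls under one of the two cases. -/

theorem stRel_zero_iff_mem_stSat {R : Type*} [CommSemiring R] (I : Set R) (x : R) :
    STRel I x 0 ↔ x ∈ STSat I := by
  constructor
  · rintro ⟨a, ha, b, hb, hab⟩
    exact ⟨a, ha, by rwa [hab, zero_add]⟩
  · rintro ⟨a, ha, hxa⟩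
    exact ⟨a, ha, x + a, hxa, (zero_add _).symm⟩

structure IsSupertropical (U : Type*) [CommSemiring U] : Prop where
  ghost_mul_self : (1 + 1 : U) * (1 + 1) = 1 + 1
  add_of_ghost_eq : ∀ x y : U, (1 + 1) * x = (1 + 1) * y → x + y = (1 + 1) * x
  add_of_ghost_ne : ∀ x y : U, (1 + 1) * x ≠ (1 + 1) * y → x + y = x ∨ x + y = y

namespace IsSupertropical

variable {U : Type*} [CommSemiring U] (hU : IsSupertropical U)
include hU

theorem ghost_mul_ghost (x : U) : (1 + 1) * ((1 + 1) * x) = (1 + 1) * x := by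
  rw [← mul_assoc, hU.ghost_mul_self]

theorem ghost_add_self (x : U) : (1 + 1) * x + (1 + 1) * x = (1 + 1) * x := by
  calc (1 + 1) * x + (1 + 1) * x = (1 + 1) * ((1 + 1) * x) := by ring
    _ = (1 + 1) * x := hU.ghost_mul_ghost x

theorem ghost_add_ghost_eq_left_or_right (x y : U) :
    (1 + 1) * x + (1 + 1) * y = (1 + 1) * x ∨ (1 + 1) * x + (1 + 1) * y = (1 + 1) * y := by
  by_cases h : (1 + 1) * x = (1 + 1) * y
  · left
    rw [← h, hU.ghost_add_self]
  · exact hU.add_of_ghost_ne _ _ (by rwa [hU.ghost_mul_ghost, hU.ghost_mul_ghost])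

theorem add_eq_left_of_ghost_lt {x a : U} (hle : (1 + 1) * a + (1 + 1) * x = (1 + 1) * x)
    (hne : (1 + 1) * a ≠ (1 + 1) * x) : x + a = x := by
  refine (hU.add_of_ghost_ne x a (Ne.symm hne)).resolve_right fun h => hne ?_
  calc (1 + 1) * a = (1 + 1) * (x + a) := by rw [h]
    _ = (1 + 1) * x := by rw [mul_add, add_comm, hle]

theorem add_ghost_eq_of_ghost_le {x b : U} (hle : (1 + 1) * x + (1 + 1) * b = (1 + 1) * b) :
    x + (1 + 1) * b = (1 + 1) * b := by
  by_cases h : (1 + 1) * x = (1 + 1) * b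
  · rw [hU.add_of_ghost_eq x _ (by rw [h, hU.ghost_mul_ghost]), h]
  · refine (hU.add_of_ghost_ne x _ (by rwa [hU.ghost_mul_ghost])).resolve_left fun h' => h ?_
    calc (1 + 1) * x = (1 + 1) * (x + (1 + 1) * b) := by rw [h']
      _ = (1 + 1) * b := by rw [mul_add, hU.ghost_mul_ghost, hle]

theorem ghost_le_or_lt (x a : U) :
    (1 + 1) * x + (1 + 1) * a = (1 + 1) * a ∨
      ((1 + 1) * a + (1 + 1) * x = (1 + 1) * x ∧ (1 + 1) * a ≠ (1 + 1) * x) := by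
  by_cases h : (1 + 1) * a = (1 + 1) * x
  · left
    rw [h, hU.ghost_add_self]
  · rcases hU.ghost_add_ghost_eq_left_or_right x a with hx | ha
    · exact Or.inr ⟨by rwa [add_comm], h⟩
    · exact Or.inl ha

theorem stRel_eq_of_ghost_lt {I : Set U} {x y : U}
    (hx : ∀ a ∈ I, (1 + 1) * a + (1 + 1) * x = (1 + 1) * x ∧ (1 + 1) * a ≠ (1 + 1) * x)
    (hxy : STRel I x y) : y = x := by
  obtain ⟨a, ha, b, hb, hab⟩ := hxy
  have hx_eq : x = y + b := by rw [← hab, hU.add_eq_left_of_ghost_lt (hx a ha).1 (hx a ha).2]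
  obtain ⟨hbx, hbx_ne⟩ := hx b hb
  -- The ghost `e x = e y + e b` is the larger of `e y` and `e b`, and it is not `e b`.
  have hyx : (1 + 1) * y = (1 + 1) * x := by
    have hsum : (1 + 1) * x = (1 + 1) * y + (1 + 1) * b := by rw [hx_eq, mul_add]
    rcases hU.ghost_add_ghost_eq_left_or_right y b with h | h
    · rw [hsum, h]
    · exact absurd (hsum.trans h) (Ne.symm hbx_ne)
  rw [hx_eq, hU.add_eq_left_of_ghost_lt (hyx ▸ hbx) (hyx ▸ hbx_ne)]

theorem stRel_zero_of_ghost_le {I : Set U} (hI : IsSemiringIdeal I) {x a : U} (ha : a ∈ I)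
    (hle : (1 + 1) * x + (1 + 1) * a = (1 + 1) * a) : STRel I x 0 := by
  have hea : (1 + 1) * a ∈ I := hI.2.2 _ a ha
  exact ⟨_, hea, _, hea, by rw [hU.add_ghost_eq_of_ghost_le hle, zero_add]⟩

theorem stRel_eq_of_not_mem_stSat {I : Set U} (hI : IsSemiringIdeal I) {x y : U}
    (hx : x ∉ STSat I) (hxy : STRel I x y) : y = x := by
  refine hU.stRel_eq_of_ghost_lt (fun a ha => ?_) hxy
  refine (hU.ghost_le_or_lt x a).resolve_left fun hle => hx ?_
  exact (stRel_zero_iff_mem_stSat I x).1 (hU.stRel_zero_of_ghost_le hI ha hle)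

end IsSupertropical

/-- description of the classes of `E(𝔞)` on a supertropical
semiring: (i) if `e*a < e*x` (ghost order) for all `a ∈ 𝔞`, the class of `x`
is `{x}`; (ii) if `e*x ≤ e*a` for some `a ∈ 𝔞`, then `x ~ 0`. The classes are
exactly `sat 𝔞` (the class of `0`) and singletons `{x}`, `x ∉ sat 𝔞`. -/
theorem ideal_rel_classes {U : Type*} [CommSemiring U]
    (hST1 : (1 + 1 : U) * (1 + 1) = 1 + 1)
    (hST2 : ∀ x y : U, (1 + 1) * x = (1 + 1) * y → x + y = (1 + 1) * x)
    (hST3 : ∀ x y : U, (1 + 1) * x ≠ (1 + 1) * y → x + y = x ∨ x + y = y)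
    (I : Set U) (hI : IsSemiringIdeal I) :
    -- (i)
    (∀ x : U, (∀ a ∈ I, (1 + 1) * a + (1 + 1) * x = (1 + 1) * x ∧
        (1 + 1) * a ≠ (1 + 1) * x) →
      ∀ y : U, STRel I x y → y = x) ∧
    -- (ii)
    (∀ x : U, (∃ a ∈ I, (1 + 1) * x + (1 + 1) * a = (1 + 1) * a) →
      STRel I x 0) ∧
    -- consequently: the class of 0 is sat 𝔞 ...
    (∀ x : U, STRel I x 0 ↔ x ∈ STSat I) ∧
    -- ... and every other class is a singleton
    (∀ x : U, x ∉ STSat I → ∀ y : U, STRel I x y → y = x) := by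
  have hU : IsSupertropical U := ⟨hST1, hST2, hST3⟩
  exact ⟨fun x hx y => hU.stRel_eq_of_ghost_lt hx,
    fun x ⟨a, ha, hle⟩ => hU.stRel_zero_of_ghost_le hI ha hle,
    stRel_zero_iff_mem_stSat I,
    fun x hx y => hU.stRel_eq_of_not_mem_stSat hI hx⟩
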